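/- arXiv:2112.01772 — 2 statements merged into one kernel-verified Lean document; each statement's English description precedes it below -/
import Mathlib

section
/- Let Y ∈ {0,1} be a binary random variable and X a random vector, and let p(X) = P(Y = 1 | X). Then Y and X are conditionally independent given p(X). -/
open MeasureTheory

/-!
Write `m = σ(X)` and `q = E[Y | m]`. The σ-algebra `σ(p)` need not be contained in `m`, but
since `p = q` a.e. every `σ(p)`-set is a.e. equal to an `m`-set, which is enough for the tower
property. Hence for `m`-measurable `h`,
`E[h Y | p] = E[E[h Y | m] | p] = E[h q | p] = E[h p | p] = p E[h | p]`;
with `h = 1` this gives `E[Y | p] = p`, so `E[f(X) Y | p] = E[f(X) | p] E[Y | p]`.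
Since `Y ∈ {0,1}`, `g(Y) = g 0 + (g 1 - g 0) Y` is affine in `Y`, and the factorization
passes to `g(Y)` by linearity.
-/

section

variable {Ω : Type*} {m m' m₀ : MeasurableSpace Ω} {μ : Measure Ω}

theorem exists_measurableSet_ae_eq_of_measurableSet_comap {β : Type*} [MeasurableSpace β]
    {p q : Ω → β} (hq : Measurable[m] q) (hpq : p =ᵐ[μ] q) {s : Set Ω}
    (hs : MeasurableSet[MeasurableSpace.comap p inferInstance] s) :
    ∃ t, MeasurableSet[m] t ∧ s =ᵐ[μ] t := by
  obtain ⟨B, hB, rfl⟩ := hs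
  refine ⟨q ⁻¹' B, hq hB, Filter.eventuallyEq_set.mpr ?_⟩
  filter_upwards [hpq] with ω hω
  simp [hω]

theorem condExp_condExp_of_forall_ae_eq_measurableSet [IsFiniteMeasure μ]
    (hm : m ≤ m₀) (hm' : m' ≤ m₀)
    (h : ∀ s, MeasurableSet[m'] s → ∃ t, MeasurableSet[m] t ∧ s =ᵐ[μ] t)
    {f : Ω → ℝ} (hf : Integrable f μ) :
    μ[μ[f | m] | m'] =ᵐ[μ] μ[f | m'] := by
  refine ae_eq_condExp_of_forall_setIntegral_eq hm' hf
    (fun s _ _ => integrable_condExp.integrableOn) (fun s hs _ => ?_)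
    stronglyMeasurable_condExp.aestronglyMeasurable
  obtain ⟨t, ht, hst⟩ := h s hs
  calc ∫ ω in s, μ[μ[f | m] | m'] ω ∂μ
      = ∫ ω in s, μ[f | m] ω ∂μ := setIntegral_condExp hm' integrable_condExp hs
    _ = ∫ ω in t, μ[f | m] ω ∂μ := setIntegral_congr_set hst
    _ = ∫ ω in t, f ω ∂μ := setIntegral_condExp hm hf ht
    _ = ∫ ω in s, f ω ∂μ := (setIntegral_congr_set hst).symm

theorem condExp_comap_mul_of_ae_eq_condExp [IsFiniteMeasure μ] (hm : m ≤ m₀)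
    {Z p h : Ω → ℝ} (hZ : Integrable Z μ) (hp_meas : Measurable p) (hp : p =ᵐ[μ] μ[Z | m])
    (hh : StronglyMeasurable[m] h) (hh_int : Integrable h μ) (hhZ : Integrable (h * Z) μ) :
    μ[h * Z | MeasurableSpace.comap p inferInstance]
      =ᵐ[μ] p * μ[h | MeasurableSpace.comap p inferInstance] := by
  have hpull : μ[h * Z | m] =ᵐ[μ] h * p := by
    filter_upwards [condExp_mul_of_stronglyMeasurable_left hh hhZ hZ, hp] with ω h₁ h₂
    rw [h₁, Pi.mul_apply, Pi.mul_apply, h₂]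
  have hp_sm : StronglyMeasurable[MeasurableSpace.comap p inferInstance] p :=
    (comap_measurable p).stronglyMeasurable
  have hph : Integrable (p * h) μ :=
    (integrable_condExp.congr hpull).congr (.of_eq (mul_comm h p))
  calc μ[h * Z | MeasurableSpace.comap p inferInstance]
      =ᵐ[μ] μ[μ[h * Z | m] | MeasurableSpace.comap p inferInstance] :=
        (condExp_condExp_of_forall_ae_eq_measurableSet hm hp_meas.comap_le
          (fun _ => exists_measurableSet_ae_eq_of_measurableSet_comap
            stronglyMeasurable_condExp.measurable hp) hhZ).symm
    _ =ᵐ[μ] μ[p * h | MeasurableSpace.comap p inferInstance] := by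
        rw [mul_comm p h]; exact condExp_congr_ae hpull
    _ =ᵐ[μ] p * μ[h | MeasurableSpace.comap p inferInstance] :=
        condExp_mul_of_stronglyMeasurable_left hp_sm hph hh_int

theorem condExp_mul_affine_of_condExp_mul [IsFiniteMeasure μ] (hm : m ≤ m₀)
    {F Y : Ω → ℝ} (hF : Integrable F μ) (hY : Integrable Y μ) (hFY : Integrable (F * Y) μ)
    (hfac : μ[F * Y | m] =ᵐ[μ] μ[F | m] * μ[Y | m]) (a b : ℝ) :
    μ[fun ω => F ω * (a + b * Y ω) | m]
      =ᵐ[μ] fun ω => μ[F | m] ω * μ[fun ω => a + b * Y ω | m] ω := by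
  have hlhs : (fun ω => F ω * (a + b * Y ω)) = a • F + b • (F * Y) := by
    ext ω; simp only [Pi.add_apply, Pi.smul_apply, Pi.mul_apply, smul_eq_mul]; ring
  have hrhs : (fun ω => a + b * Y ω) = (fun _ => a) + b • Y := rfl
  rw [hlhs, hrhs]
  filter_upwards [condExp_add (hF.smul a) (hFY.smul b) m, condExp_smul a F m,
    condExp_smul b (F * Y) m, hfac, condExp_add (integrable_const a) (hY.smul b) m,
    condExp_smul b Y m] with ω h₁ h₂ h₃ h₄ h₅ h₆
  simp only [Pi.add_apply, Pi.smul_apply, Pi.mul_apply, smul_eq_mul, condExp_const hm] at *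
  rw [h₁, h₂, h₃, h₄, h₅, h₆]
  ring

theorem apply_eq_affine_of_eq_zero_or_eq_one {y : ℝ} (hy : y = 0 ∨ y = 1) (g : ℝ → ℝ) :
    g y = g 0 + (g 1 - g 0) * y := by
  rcases hy with rfl | rfl <;> ring

theorem integrable_of_abs_le [IsFiniteMeasure μ] {u : Ω → ℝ} (hu : Measurable u) {C : ℝ}
    (hC : ∀ ω, |u ω| ≤ C) : Integrable u μ :=
  .of_bound hu.aestronglyMeasurable C (.of_forall hC)

end

/-- Lemma A.2: if `Y ∈ {0,1}` and `p` is a version of `P(Y = 1 | X)` (i.e. of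
`E[Y | σ(X)]`), then `Y` and `X` are conditionally independent given `p`, in the
sense that `E[f(X) g(Y) | p] = E[f(X) | p] · E[g(Y) | p]` a.e. for all bounded
measurable `f`, `g`. -/
theorem cond_indep_given_propensity
    {Ω : Type*} [mΩ : MeasurableSpace Ω] (μ : Measure Ω) [IsProbabilityMeasure μ]
    {k : ℕ} (X : Ω → (Fin k → ℝ)) (Y : Ω → ℝ)
    (hX : Measurable X) (hY : Measurable Y)
    (hY01 : ∀ ω, Y ω = 0 ∨ Y ω = 1)
    (p : Ω → ℝ) (hp_meas : Measurable p)
    (hp : p =ᵐ[μ] condExp (MeasurableSpace.comap X inferInstance) μ Y) :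
    ∀ (f : (Fin k → ℝ) → ℝ) (g : ℝ → ℝ), Measurable f → Measurable g →
      (∃ Mf, ∀ x, |f x| ≤ Mf) → (∃ Mg, ∀ y, |g y| ≤ Mg) →
      condExp (MeasurableSpace.comap p inferInstance) μ (fun ω => f (X ω) * g (Y ω))
        =ᵐ[μ] fun ω =>
          (condExp (MeasurableSpace.comap p inferInstance) μ (fun ω' => f (X ω')) ω) *
          (condExp (MeasurableSpace.comap p inferInstance) μ (fun ω' => g (Y ω')) ω) := by
  rintro f g hf - ⟨Mf, hMf⟩ -
  set F : Ω → ℝ := fun ω => f (X ω)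
  have hY_abs : ∀ ω, |Y ω| ≤ 1 := fun ω => by rcases hY01 ω with h | h <;> simp [h]
  have hF_meas : Measurable F := hf.comp hX
  have hF_int : Integrable F μ := integrable_of_abs_le hF_meas fun ω => hMf (X ω)
  have hY_int : Integrable Y μ := integrable_of_abs_le hY hY_abs
  have hFY_int : Integrable (F * Y) μ :=
    hF_int.mul_bdd hY.aestronglyMeasurable (.of_forall hY_abs)
  have hF_sm : StronglyMeasurable[MeasurableSpace.comap X inferInstance] F :=
    (hf.comp (comap_measurable X)).stronglyMeasurable
  have hFY := condExp_comap_mul_of_ae_eq_condExp hX.comap_le hY_int hp_meas hp hF_sm hF_int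
    hFY_int
  have hYp : μ[Y | MeasurableSpace.comap p inferInstance] =ᵐ[μ] p := by
    have h := condExp_comap_mul_of_ae_eq_condExp (h := fun _ => 1) hX.comap_le hY_int hp_meas
      hp stronglyMeasurable_const (integrable_const 1) (by simpa [Pi.mul_def] using hY_int)
    simpa [Pi.mul_def, condExp_const hp_meas.comap_le] using h
  have hg : ∀ ω, g (Y ω) = g 0 + (g 1 - g 0) * Y ω :=
    fun ω => apply_eq_affine_of_eq_zero_or_eq_one (hY01 ω) g
  simp only [hg]
  refine condExp_mul_affine_of_condExp_mul hp_meas.comap_le hF_int hY_int hFY_int ?_ _ _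
  filter_upwards [hFY, hYp] with ω h₁ h₂
  rw [h₁, Pi.mul_apply, Pi.mul_apply, h₂, mul_comm]
end

section
/- If the map β ↦ FP(c,β) has a gradient ∇_β FP(c,β) that is uniformly continuous on [a₀,b₀] × B*(s) for some s > 0 and bounded by M there, and √n(β̂ − β*) = O_p(1) with β̂ → β* in probability, then the mean-value-expansion remainder A_{2n}(c) = √n[FP(c,β̂) − FP(c,β*)] − ∇_β FP(c,β*)·√n(β̂ − β*) satisfies sup_{c∈[a₀,b₀]} |A_{2n}(c)| → 0 in probability. -/
open MeasureTheory Set Filter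

/-- Lemma A.4(ii): if `β ↦ FP(c,β)` has a gradient that is bounded and
uniformly continuous on `[a₀,b₀] × B*(s)` and `√n(β̂−β*) = O_p(1)` with
`β̂ →p β*`, then the mean-value-expansion remainder
`A₂ₙ(c) = √n[FP(c,β̂) − FP(c,β*)] − ∇_β FP(c,β*)·√n(β̂−β*)` is `o_p(1)`
uniformly in `c ∈ [a₀,b₀]`. -/
theorem mean_value_remainder_uniform_op
    {Ω : Type*} [mΩ : MeasurableSpace Ω] (μ : Measure Ω) [IsProbabilityMeasure μ]
    {E : Type*} [NormedAddCommGroup E] [NormedSpace ℝ E]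
    (a₀ b₀ : ℝ) (hab : a₀ < b₀)
    (FP : ℝ → E → ℝ) (βs : E) (s M : ℝ) (hs : 0 < s) (hM : 0 < M)
    (grad : ℝ → E → (E →L[ℝ] ℝ))
    (hdiff : ∀ c ∈ Icc a₀ b₀, ∀ β ∈ Metric.ball βs s,
      HasFDerivAt (FP c) (grad c β) β)
    (hUC : UniformContinuousOn (fun q : ℝ × E => grad q.1 q.2)
      (Icc a₀ b₀ ×ˢ Metric.ball βs s))
    (hbd : ∀ c ∈ Icc a₀ b₀, ∀ β ∈ Metric.ball βs s, ‖grad c β‖ ≤ M)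
    (βhat : ℕ → Ω → E)
    (hOp : ∀ ε > 0, ∃ K > 0, ∀ n : ℕ,
      μ {ω | K < Real.sqrt n * ‖βhat n ω - βs‖} ≤ ENNReal.ofReal ε)
    (hconsistent : ∀ ε > 0,
      Tendsto (fun n => μ {ω | ε ≤ ‖βhat n ω - βs‖}) atTop (nhds 0)) :
    ∀ ε > 0,
      Tendsto
        (fun n : ℕ => μ {ω | ε ≤ ⨆ c : Icc a₀ b₀,
          |Real.sqrt n * (FP c (βhat n ω) - FP c βs)
            - Real.sqrt n * (grad (c : ℝ) βs (βhat n ω - βs))|})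
        atTop (nhds 0) := by
  intro ε hε
  rw [ENNReal.tendsto_nhds_zero]
  intro η hη
  -- extract a positive real below η
  obtain ⟨r, hr0, hrη⟩ : ∃ r > 0, ENNReal.ofReal r ≤ η := by
    have hne : (min η 1) ≠ ⊤ := ne_top_of_le_ne_top ENNReal.one_ne_top (min_le_right _ _)
    refine ⟨(min η 1).toReal, ?_, ?_⟩
    · exact ENNReal.toReal_pos (lt_min hη zero_lt_one).ne' hne
    · rw [ENNReal.ofReal_toReal hne]
      exact min_le_left _ _
  -- O_p bound with level r/2
  obtain ⟨K, hK0, hKbd⟩ := hOp (r / 2) (by linarith)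
  -- uniform continuity: pick δ for modulus ε/(2K)
  have hC : (0:ℝ) < ε / (2 * K) := by positivity
  rw [Metric.uniformContinuousOn_iff] at hUC
  obtain ⟨δ₀, hδ₀, hδ₀uc⟩ := hUC (ε / (2 * K)) hC
  set δ : ℝ := min δ₀ s with hδdef
  have hδpos : 0 < δ := lt_min hδ₀ hs
  have hδs : δ ≤ s := min_le_right _ _
  -- key deterministic bound
  have key : ∀ n : ℕ, ∀ ω : Ω,
      Real.sqrt n * ‖βhat n ω - βs‖ ≤ K → ‖βhat n ω - βs‖ < δ →
      ¬ (ε ≤ ⨆ c : Icc a₀ b₀,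
          |Real.sqrt n * (FP c (βhat n ω) - FP c βs)
            - Real.sqrt n * (grad (c : ℝ) βs (βhat n ω - βs))|) := by
    intro n ω hωK hωδ
    have hball : ∀ β ∈ Metric.ball βs δ, β ∈ Metric.ball βs s := fun β hβ =>
      Metric.ball_subset_ball hδs hβ
    have hβsball : βs ∈ Metric.ball βs δ := Metric.mem_ball_self hδpos
    have hβhatball : βhat n ω ∈ Metric.ball βs δ := by
      simpa [Metric.mem_ball, dist_eq_norm] using hωδ
    have hbound : ∀ c : Icc a₀ b₀,
        |Real.sqrt n * (FP c (βhat n ω) - FP c βs)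
          - Real.sqrt n * (grad (c : ℝ) βs (βhat n ω - βs))| ≤ ε / 2 := by
      intro c
      have hc := c.2
      -- gradient variation bound on the small ball
      have hgrad : ∀ β ∈ Metric.ball βs δ,
          ‖grad (c : ℝ) β - grad (c : ℝ) βs‖ ≤ ε / (2 * K) := by
        intro β hβ
        have h1 : ((c : ℝ), β) ∈ Icc a₀ b₀ ×ˢ Metric.ball βs s :=
          ⟨hc, hball β hβ⟩
        have h2 : ((c : ℝ), βs) ∈ Icc a₀ b₀ ×ˢ Metric.ball βs s :=
          ⟨hc, Metric.mem_ball_self hs⟩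
        have hd : dist ((c : ℝ), β) ((c : ℝ), βs) < δ₀ := by
          rw [Prod.dist_eq]
          simp only [dist_self]
          exact max_lt hδ₀ (lt_of_lt_of_le hβ (min_le_left _ _))
        have := hδ₀uc _ h1 _ h2 hd
        rw [dist_eq_norm] at this
        exact le_of_lt this
      -- mean value inequality
      have hmv : ‖FP c (βhat n ω) - FP c βs - grad (c : ℝ) βs (βhat n ω - βs)‖
          ≤ ε / (2 * K) * ‖βhat n ω - βs‖ := by
        apply (convex_ball βs δ).norm_image_sub_le_of_norm_hasFDerivWithin_le'
          (f' := fun β => grad (c : ℝ) β)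
          (fun β hβ => (hdiff c hc β (hball β hβ)).hasFDerivWithinAt)
          hgrad hβsball hβhatball
      have hsqrt : (0:ℝ) ≤ Real.sqrt n := Real.sqrt_nonneg n
      calc |Real.sqrt n * (FP c (βhat n ω) - FP c βs)
            - Real.sqrt n * (grad (c : ℝ) βs (βhat n ω - βs))|
          = Real.sqrt n * ‖FP c (βhat n ω) - FP c βs
              - grad (c : ℝ) βs (βhat n ω - βs)‖ := by
            rw [← mul_sub, abs_mul, abs_of_nonneg hsqrt, Real.norm_eq_abs]
        _ ≤ Real.sqrt n * (ε / (2 * K) * ‖βhat n ω - βs‖) := by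
            exact mul_le_mul_of_nonneg_left hmv hsqrt
        _ = ε / (2 * K) * (Real.sqrt n * ‖βhat n ω - βs‖) := by ring
        _ ≤ ε / (2 * K) * K := by
            exact mul_le_mul_of_nonneg_left hωK (le_of_lt hC)
        _ = ε / 2 := by field_simp
    intro hsup
    haveI : Nonempty (Icc a₀ b₀) := ⟨⟨a₀, le_refl _, le_of_lt hab⟩⟩
    have : (⨆ c : Icc a₀ b₀,
        |Real.sqrt n * (FP c (βhat n ω) - FP c βs)
          - Real.sqrt n * (grad (c : ℝ) βs (βhat n ω - βs))|) ≤ ε / 2 :=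
      ciSup_le hbound
    linarith
  -- measure bound: bad set ⊆ {K < √n‖·‖} ∪ {δ ≤ ‖·‖}
  have hsub : ∀ n : ℕ,
      {ω | ε ≤ ⨆ c : Icc a₀ b₀,
          |Real.sqrt n * (FP c (βhat n ω) - FP c βs)
            - Real.sqrt n * (grad (c : ℝ) βs (βhat n ω - βs))|}
      ⊆ {ω | K < Real.sqrt n * ‖βhat n ω - βs‖} ∪ {ω | δ ≤ ‖βhat n ω - βs‖} := by
    intro n ω hω
    by_contra hcon
    simp only [mem_union, mem_setOf_eq, not_or, not_lt, not_le] at hcon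
    exact key n ω hcon.1 hcon.2 hω
  -- conclusion: eventually the measure is ≤ η
  have hcons := (ENNReal.tendsto_nhds_zero.mp (hconsistent δ hδpos))
    (ENNReal.ofReal (r / 2)) (by simp [ENNReal.ofReal_pos]; linarith)
  filter_upwards [hcons] with n hn
  calc μ {ω | ε ≤ ⨆ c : Icc a₀ b₀,
          |Real.sqrt n * (FP c (βhat n ω) - FP c βs)
            - Real.sqrt n * (grad (c : ℝ) βs (βhat n ω - βs))|}
      ≤ μ ({ω | K < Real.sqrt n * ‖βhat n ω - βs‖} ∪ {ω | δ ≤ ‖βhat n ω - βs‖}) :=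
        measure_mono (hsub n)
    _ ≤ μ {ω | K < Real.sqrt n * ‖βhat n ω - βs‖} + μ {ω | δ ≤ ‖βhat n ω - βs‖} :=
        measure_union_le _ _
    _ ≤ ENNReal.ofReal (r / 2) + ENNReal.ofReal (r / 2) := add_le_add (hKbd n) hn
    _ = ENNReal.ofReal r := by
        rw [← ENNReal.ofReal_add (by linarith) (by linarith)]; norm_num
    _ ≤ η := hrη
end
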